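/- arXiv:1910.04019 — 2 statements merged into one kernel-verified Lean document; each statement's English description precedes it below -/
import Mathlib

section
/- Let (G,σ) be a magnetic graph with signature values in S¹_ℓ. If f : V → ℂ is an eigenfunction of Δ^σ with eigenvalue λ (i.e. f is nonzero and Δ^σ f = λ f), then the lift embedding f̂ is an eigenfunction of the lift Laplacian Δ̂ with the same eigenvalue λ (i.e. f̂ is nonzero and Δ̂ f̂ = λ f̂). -/
open Finset ComplexConjugate
open scoped Classical

namespace Mag

variable {V : Type*}

/-- The degree of a vertex: total weight of incident edges. -/
noncomputable def deg [Fintype V] (p : V → V → ℝ) (x : V) : ℝ := ∑ y, p x y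

/-- Adjacency: positive edge weight. -/
def Adj (p : V → V → ℝ) (x y : V) : Prop := 0 < p x y

/-- Axioms of a weighted graph: symmetric nonnegative weights, no loops,
positive degrees. -/
structure IsWeightedGraph [Fintype V] (p : V → V → ℝ) : Prop where
  symm : ∀ x y, p x y = p y x
  nonneg : ∀ x y, 0 ≤ p x y
  loopless : ∀ x, p x x = 0
  deg_pos : ∀ x, 0 < deg p x

/-- Connectivity: any two vertices are joined by a path of successively
adjacent vertices. -/
def Connected (p : V → V → ℝ) : Prop :=
  ∀ x y : V, ∃ L : List V,
    List.Chain (Adj p) x L ∧ (x :: L).getLast (List.cons_ne_nil x L) = y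

/-- The graph distance from `x` to `y` is at most `n`. -/
def distLE (p : V → V → ℝ) (x y : V) (n : ℕ) : Prop :=
  ∃ L : List V, L.length ≤ n ∧ List.Chain (Adj p) x L ∧
    (x :: L).getLast (List.cons_ne_nil x L) = y

/-- `D` is the diameter: every pair of vertices is at distance at most `D`,
and some pair is at distance at least `D`. -/
def IsDiameter (p : V → V → ℝ) (D : ℕ) : Prop :=
  (∀ x y, distLE p x y D) ∧ ∃ x y, ∀ n, distLE p x y n → D ≤ n

/-- The (normalized) graph Laplace operator on complex-valued functions. -/
noncomputable def lap [Fintype V] (p : V → V → ℝ) (f : V → ℂ) (x : V) : ℂ :=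
  (deg p x : ℂ)⁻¹ * ∑ y, (p x y : ℂ) * (f y - f x)

/-- The graph Laplace operator acting on real-valued functions. -/
noncomputable def lapR [Fintype V] (p : V → V → ℝ) (u : V → ℝ) (x : V) : ℝ :=
  (deg p x)⁻¹ * ∑ y, p x y * (u y - u x)

/-- The energy `|∇f|²(x)` of a function at a vertex. -/
noncomputable def energy [Fintype V] (p : V → V → ℝ) (f : V → ℂ) (x : V) : ℝ :=
  (deg p x)⁻¹ * ∑ y, p x y * ‖f y - f x‖ ^ 2

/-- The first curvature operator `Γ`. -/
noncomputable def gamma [Fintype V] (p : V → V → ℝ) (f g : V → ℂ) (x : V) : ℂ :=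
  (1 / 2) * (lap p (fun v => f v * conj (g v)) x - f x * conj (lap p g x)
    - lap p f x * conj (g x))

/-- The iterated (Ricci) curvature operator `Γ₂`. -/
noncomputable def gamma2 [Fintype V] (p : V → V → ℝ) (f g : V → ℂ) (x : V) : ℂ :=
  (1 / 2) * (lap p (gamma p f g) x - gamma p f (lap p g) x - gamma p (lap p f) g x)

/-- `f` satisfies the curvature-dimension inequality `CD(n,κ)`:
`Γ₂(f,f)(x) ≥ (1/n)|Δf(x)|² + κ·Γ(f,f)(x)` at every vertex. -/
def SatCD [Fintype V] (p : V → V → ℝ) (n κ : ℝ) (f : V → ℂ) : Prop :=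
  ∀ x : V, (1 / n) * ‖lap p f x‖ ^ 2 + κ * (gamma p f f x).re ≤ (gamma2 p f f x).re

/-- The magnetic Laplace operator. -/
noncomputable def magLap [Fintype V] (p : V → V → ℝ) (σ : V → V → ℂ)
    (f : V → ℂ) (x : V) : ℂ :=
  (deg p x : ℂ)⁻¹ * ∑ y, (p x y : ℂ) * (σ x y * f y - f x)

/-- The magnetic energy `|∇^σ f|²(x)`. -/
noncomputable def magEnergy [Fintype V] (p : V → V → ℝ) (σ : V → V → ℂ)
    (f : V → ℂ) (x : V) : ℝ :=
  (deg p x)⁻¹ * ∑ y, p x y * ‖σ x y * f y - f x‖ ^ 2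

/-- The first magnetic curvature operator `Γ^σ`. -/
noncomputable def magGamma [Fintype V] (p : V → V → ℝ) (σ : V → V → ℂ)
    (f g : V → ℂ) (x : V) : ℂ :=
  (1 / 2) * (magLap p σ (fun v => f v * conj (g v)) x - f x * conj (magLap p σ g x)
    - magLap p σ f x * conj (g x))

/-- The magnetic Ricci curvature operator `Γ₂^σ`. -/
noncomputable def magGamma2 [Fintype V] (p : V → V → ℝ) (σ : V → V → ℂ)
    (f g : V → ℂ) (x : V) : ℂ :=
  (1 / 2) * (lap p (magGamma p σ f g) x - magGamma p σ f (magLap p σ g) x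
    - magGamma p σ (magLap p σ f) g x)

/-- `f` satisfies the magnetic curvature-dimension inequality `CD^σ(n,κ)`. -/
def SatCDSigma [Fintype V] (p : V → V → ℝ) (σ : V → V → ℂ) (n κ : ℝ)
    (f : V → ℂ) : Prop :=
  ∀ x : V, (1 / n) * ‖magLap p σ f x‖ ^ 2 + κ * (magGamma p σ f f x).re
    ≤ (magGamma2 p σ f f x).re

/-- A signature with values in the group `S¹_ℓ` of `ℓ`-th roots of unity:
`σ_{xy}^ℓ = 1` and `σ_{yx} = σ_{xy}⁻¹` on oriented edges. -/
structure IsSignature (p : V → V → ℝ) (σ : V → V → ℂ) (ℓ : ℕ) : Prop where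
  mem : ∀ x y, Adj p x y → σ x y ^ ℓ = 1
  inv : ∀ x y, Adj p x y → σ x y * σ y x = 1

/-- The signature is entire: its values (on oriented edges) generate all of
`S¹_ℓ`, i.e. every `ℓ`-th root of unity is a product of signature values. -/
def Entire (p : V → V → ℝ) (σ : V → V → ℂ) (ℓ : ℕ) : Prop :=
  ∀ z : ℂ, z ^ ℓ = 1 →
    ∃ L : List (V × V), (∀ e ∈ L, Adj p e.1 e.2) ∧ (L.map fun e => σ e.1 e.2).prod = z

/-- The product of the signature values along the consecutive edges of a
list of vertices. -/
noncomputable def sigProd (σ : V → V → ℂ) (L : List V) : ℂ :=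
  ((L.zip L.tail).map fun e => σ e.1 e.2).prod

/-- A directed cycle: a closed walk along adjacent vertices. -/
def IsCycle (p : V → V → ℝ) (L : List V) : Prop :=
  2 ≤ L.length ∧ L.Chain' (Adj p) ∧ L.head? = L.getLast?

/-- A magnetic graph is balanced if the signature product along every directed
cycle equals `1`. -/
def Balanced (p : V → V → ℝ) (σ : V → V → ℂ) : Prop :=
  ∀ L : List V, IsCycle p L → sigProd σ L = 1

/-- A directed cycle whose signature product generates `S¹_ℓ`. -/
def IsGenCycle (p : V → V → ℝ) (σ : V → V → ℂ) (ℓ : ℕ) (L : List V) : Prop :=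
  IsCycle p L ∧ ∀ z : ℂ, z ^ ℓ = 1 → ∃ m : ℕ, sigProd σ L ^ m = z

/-- `g` is the magnetic girth: the length of a shortest directed cycle whose
signature product generates `S¹_ℓ`.  (A list of `g+1` vertices, with equal
endpoints, traverses `g` edges.) -/
def IsMagGirth (p : V → V → ℝ) (σ : V → V → ℂ) (ℓ : ℕ) (g : ℕ) : Prop :=
  (∃ L, IsGenCycle p σ ℓ L ∧ L.length = g + 1) ∧
  ∀ L, IsGenCycle p σ ℓ L → g + 1 ≤ L.length

/-- The `ℓ`-th roots of unity in `ℂ` form a finite type. -/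
noncomputable instance rootsFintype (ℓ : ℕ) [NeZero ℓ] :
    Fintype {z : ℂ // z ^ ℓ = 1} := by
  apply Fintype.ofFinset ((Polynomial.nthRoots ℓ (1 : ℂ)).toFinset)
  intro z
  rw [Multiset.mem_toFinset, Polynomial.mem_nthRoots (Nat.pos_of_ne_zero (NeZero.ne ℓ))]
  exact Iff.rfl

/-- The weight function of the lift (covering) graph `Ĝ` on `V × S¹_ℓ`. -/
noncomputable def liftP (p : V → V → ℝ) (σ : V → V → ℂ) (ℓ : ℕ) :
    V × {z : ℂ // z ^ ℓ = 1} → V × {z : ℂ // z ^ ℓ = 1} → ℝ :=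
  fun a b =>
    if Adj p a.1 b.1 ∧ (b.2 : ℂ) = (a.2 : ℂ) * σ a.1 b.1 then p a.1 b.1 else 0

/-- The lift embedding `f̂(x,ξ) = ξ·f(x)`. -/
noncomputable def liftEmb (ℓ : ℕ) (f : V → ℂ) : V × {z : ℂ // z ^ ℓ = 1} → ℂ :=
  fun a => (a.2 : ℂ) * f a.1

/-- A simple graph: all edge weights are `0` or `1`. -/
def Simple (p : V → V → ℝ) : Prop := ∀ x y, p x y = 0 ∨ p x y = 1

/-- `d` is the maximum degree of the graph. -/
def IsMaxDegree [Fintype V] (p : V → V → ℝ) (d : ℝ) : Prop :=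
  (∀ x, deg p x ≤ d) ∧ ∃ x, deg p x = d

/-- `l` is the least eigenvalue of `-Δ^σ`. -/
def IsLeastEigenvalue [Fintype V] (p : V → V → ℝ) (σ : V → V → ℂ) (l : ℝ) : Prop :=
  (∃ f : V → ℂ, f ≠ 0 ∧ ∀ x, -magLap p σ f x = (l : ℂ) * f x) ∧
  ∀ (μ : ℝ) (f : V → ℂ), f ≠ 0 → (∀ x, -magLap p σ f x = (μ : ℂ) * f x) → l ≤ μ

/-- The set of frustration values of a vertex subset `V₁`: sums
`∑_{edges {x,y} ⊆ V₁} p(x,y)|τ(x) − σ_{xy}τ(y)|` over switching functions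
`τ : V₁ → S¹_ℓ`.  (Each undirected edge is counted once, via the factor `1/2`.) -/
def frustrationSet [Fintype V] (p : V → V → ℝ) (σ : V → V → ℂ) (ℓ : ℕ)
    (V₁ : Finset V) : Set ℝ :=
  { r | ∃ τ : V → ℂ, (∀ x ∈ V₁, τ x ^ ℓ = 1) ∧
      r = (1 / 2) * ∑ x ∈ V₁, ∑ y ∈ V₁, p x y * ‖τ x - σ x y * τ y‖ }

/-- The set of Cheeger ratios `(ι^σ(V₁) + |E(V₁,V₁ᶜ)|)/vol(V₁)` over nonempty
vertex subsets `V₁`, where `ι^σ(V₁)` is the frustration index of `V₁`. -/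
def cheegerSet [Fintype V] (p : V → V → ℝ) (σ : V → V → ℂ) (ℓ : ℕ) : Set ℝ :=
  { r | ∃ V₁ : Finset V, V₁.Nonempty ∧ ∃ ι : ℝ, IsLeast (frustrationSet p σ ℓ V₁) ι ∧
      r = (ι + ∑ x ∈ V₁, ∑ y ∈ V₁ᶜ, p x y) / ∑ x ∈ V₁, deg p x }

/-- `h` is the magnetic Cheeger number `h₁^σ`. -/
def IsCheeger [Fintype V] (p : V → V → ℝ) (σ : V → V → ℂ) (ℓ : ℕ) (h : ℝ) : Prop :=
  IsLeast (cheegerSet p σ ℓ) h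

section Lift

variable {p : V → V → ℝ} {σ : V → V → ℂ} {ℓ : ℕ}

theorem sum_rootsOfUnity_ite_coe_eq {M : Type*} [AddCommMonoid M] [NeZero ℓ] {c : ℂ}
    (hc : c ^ ℓ = 1) (F : ℂ → M) :
    ∑ η : {z : ℂ // z ^ ℓ = 1}, (if (η : ℂ) = c then F η else 0) = F c := by
  rw [Fintype.sum_eq_single ⟨c, hc⟩ fun η hη => if_neg fun h => hη (Subtype.ext h)]
  simp

/-- Summing against the lift weights at `(x, ξ)` visits each neighbour `y` of `x` exactly once,
in the sheet `ξ σ_{xy}`. -/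
theorem sum_liftP_mul [Fintype V] [NeZero ℓ] {x : V} (hp : ∀ y, 0 ≤ p x y)
    (hσ : ∀ y, Adj p x y → σ x y ^ ℓ = 1) (ξ : {z : ℂ // z ^ ℓ = 1}) (g : V → ℂ → ℂ) :
    ∑ b, (liftP p σ ℓ (x, ξ) b : ℂ) * g b.1 b.2 = ∑ y, (p x y : ℂ) * g y (ξ * σ x y) := by
  rw [Fintype.sum_prod_type]
  refine Finset.sum_congr rfl fun y _ => ?_
  by_cases hA : Adj p x y
  · have hc : ((ξ : ℂ) * σ x y) ^ ℓ = 1 := by rw [mul_pow, ξ.2, hσ y hA, one_mul]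
    simp only [liftP, hA, true_and, apply_ite Complex.ofReal, ite_mul, Complex.ofReal_zero,
      zero_mul]
    exact sum_rootsOfUnity_ite_coe_eq hc fun η => (p x y : ℂ) * g y η
  · have hp0 : p x y = 0 := le_antisymm (not_lt.mp hA) (hp y)
    simp [liftP, hA, hp0]

theorem deg_liftP [Fintype V] [NeZero ℓ] {x : V} (hp : ∀ y, 0 ≤ p x y)
    (hσ : ∀ y, Adj p x y → σ x y ^ ℓ = 1) (ξ : {z : ℂ // z ^ ℓ = 1}) :
    deg (liftP p σ ℓ) (x, ξ) = deg p x := by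
  have h := sum_liftP_mul hp hσ ξ fun _ _ => 1
  simp only [mul_one] at h
  exact_mod_cast h

theorem lap_liftP_liftEmb [Fintype V] [NeZero ℓ] (hp : ∀ x y, 0 ≤ p x y)
    (hσ : ∀ x y, Adj p x y → σ x y ^ ℓ = 1) (f : V → ℂ) (x : V) (ξ : {z : ℂ // z ^ ℓ = 1}) :
    lap (liftP p σ ℓ) (liftEmb ℓ f) (x, ξ) = ξ * magLap p σ f x := by
  have hsum := sum_liftP_mul (hp x) (hσ x) ξ fun y η => η * f y - ξ * f x
  simp only [lap, magLap, liftEmb, deg_liftP (hp x) (hσ x) ξ] at hsum ⊢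
  rw [hsum]
  simp only [Finset.mul_sum]
  exact Finset.sum_congr rfl fun y _ => by ring

theorem liftEmb_ne_zero {f : V → ℂ} (hf : f ≠ 0) : liftEmb ℓ f ≠ 0 := by
  obtain ⟨x, hx⟩ := Function.ne_iff.mp hf
  refine Function.ne_iff.mpr ⟨(x, ⟨1, one_pow ℓ⟩), ?_⟩
  simpa [liftEmb] using hx

end Lift

theorem lift_eigenfunction_general {V : Type*} [Fintype V]
    (p : V → V → ℝ) (σ : V → V → ℂ) (ℓ : ℕ) [NeZero ℓ]
    (hG : IsWeightedGraph p) (hσ : IsSignature p σ ℓ)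
    (f : V → ℂ) (lam : ℂ) (hf0 : f ≠ 0)
    (heig : ∀ x, magLap p σ f x = lam * f x) :
    liftEmb ℓ f ≠ 0 ∧
      ∀ a : V × {z : ℂ // z ^ ℓ = 1},
        lap (liftP p σ ℓ) (liftEmb ℓ f) a = lam * liftEmb ℓ f a := by
  refine ⟨liftEmb_ne_zero hf0, fun ⟨x, ξ⟩ => ?_⟩
  rw [lap_liftP_liftEmb hG.nonneg hσ.mem, heig, liftEmb, mul_left_comm]

/-- Lemma `lifteigenfunction`.  If `f` is an eigenfunction of
`Δ^σ` with eigenvalue `λ`, then the lift embedding `f̂` is an eigenfunction of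
the lift Laplacian `Δ̂` with the same eigenvalue. -/
theorem lift_eigenfunction {V : Type*} [Fintype V] [Nonempty V]
    (p : V → V → ℝ) (σ : V → V → ℂ) (ℓ : ℕ) [NeZero ℓ]
    (hG : IsWeightedGraph p) (hσ : IsSignature p σ ℓ)
    (f : V → ℂ) (lam : ℂ) (hf0 : f ≠ 0)
    (heig : ∀ x, magLap p σ f x = lam * f x) :
    liftEmb ℓ f ≠ 0 ∧
      ∀ a : V × {z : ℂ // z ^ ℓ = 1},
        lap (liftP p σ ℓ) (liftEmb ℓ f) a = lam * liftEmb ℓ f a :=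
  lift_eigenfunction_general p σ ℓ hG hσ f lam hf0 heig

end Mag
end

section
/- Let G be a finite, connected, simple graph with diameter D and maximum degree d, let n ∈ (1,∞), κ ∈ ℝ, and suppose f : V → ℂ is a nonzero eigenfunction of −Δ with eigenvalue λ > 0 which satisfies CD(n,κ). Then λ ≥ (1 + 4κ·d·D²)/(d·(8 − 2/n)·D²). -/
open Finset ComplexConjugate
open scoped Classical

namespace Mag

variable {V : Type*}

/-!
Write `Δf = -λf` and `|∇f|² = 2Γ(f,f)`. Summing `CD(n,κ)` against the degrees, where
`∑ d_x Δu(x) = 0`, gives the Lichnerowicz bound `κ ≤ (1 - 1/n)λ`. At a maximum point of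
`|∇f|² + (4λ - 2κ)|f|²` the Laplacian of this function is nonpositive, and `CD(n,κ)` there
yields `|∇f|² ≤ 2(4λ - 2κ - λ/n)M²` everywhere, `M = max |f|`. On a simple graph this bounds
`|f(a) - f(b)|` on every edge by `K = √(2dM²(4λ - 2κ - λ/n))`. Finally `∑ d_x f(x) = 0`, so if
`|f(x₁)| = M` then `Re(f̄(x₁)f)` is `≤ 0` somewhere; following a path of length `≤ D` to that
point gives `M² ≤ D·M·K`, which is the claimed bound.
-/
section Laplacian

variable [Fintype V] (p : V → V → ℝ)

theorem sum_sum_mul_sub_eq_zero {R : Type*} [CommRing R] (w : V → V → R)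
    (hw : ∀ x y, w x y = w y x) (u : V → R) :
    ∑ x, ∑ y, w x y * (u y - u x) = 0 := by
  simp only [mul_sub, sum_sub_distrib]
  rw [sub_eq_zero, sum_comm]
  exact sum_congr rfl fun x _ => sum_congr rfl fun y _ => by rw [hw]

theorem lap_ofReal (u : V → ℝ) (x : V) :
    lap p (fun v => (u v : ℂ)) x = lapR p u x := by
  unfold lap lapR
  push_cast
  ring

theorem lap_const_mul (c : ℂ) (u : V → ℂ) (x : V) :
    lap p (fun v => c * u v) x = c * lap p u x := by
  unfold lap
  simp only [mul_sum]
  exact sum_congr rfl fun y _ => by ring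

theorem lapR_add_const_mul (c : ℝ) (u w : V → ℝ) (x : V) :
    lapR p (fun v => u v + c * w v) x = lapR p u x + c * lapR p w x := by
  unfold lapR
  simp only [mul_sum, ← sum_add_distrib]
  exact sum_congr rfl fun y _ => by ring

theorem lapR_const_mul (c : ℝ) (u : V → ℝ) (x : V) :
    lapR p (fun v => c * u v) x = c * lapR p u x := by
  unfold lapR
  simp only [mul_sum]
  exact sum_congr rfl fun y _ => by ring

variable {p}

theorem deg_mul_lapR (hG : IsWeightedGraph p) (u : V → ℝ) (x : V) :
    deg p x * lapR p u x = ∑ y, p x y * (u y - u x) :=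
  mul_inv_cancel_left₀ (hG.deg_pos x).ne' _

theorem deg_mul_lap (hG : IsWeightedGraph p) (u : V → ℂ) (x : V) :
    (deg p x : ℂ) * lap p u x = ∑ y, (p x y : ℂ) * (u y - u x) :=
  mul_inv_cancel_left₀ (Complex.ofReal_ne_zero.2 (hG.deg_pos x).ne') _

theorem deg_mul_energy (hG : IsWeightedGraph p) (f : V → ℂ) (x : V) :
    deg p x * energy p f x = ∑ y, p x y * ‖f y - f x‖ ^ 2 :=
  mul_inv_cancel_left₀ (hG.deg_pos x).ne' _

theorem sum_deg_mul_lapR (hG : IsWeightedGraph p) (u : V → ℝ) :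
    ∑ x, deg p x * lapR p u x = 0 := by
  simp only [deg_mul_lapR hG]
  exact sum_sum_mul_sub_eq_zero p hG.symm u

theorem sum_deg_mul_lap (hG : IsWeightedGraph p) (u : V → ℂ) :
    ∑ x, (deg p x : ℂ) * lap p u x = 0 := by
  simp only [deg_mul_lap hG]
  exact sum_sum_mul_sub_eq_zero _ (fun x y => by rw [hG.symm]) u

theorem energy_nonneg (hG : IsWeightedGraph p) (f : V → ℂ) (x : V) :
    0 ≤ energy p f x :=
  mul_nonneg (inv_nonneg.2 (hG.deg_pos x).le)
    (sum_nonneg fun y _ => mul_nonneg (hG.nonneg x y) (sq_nonneg _))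

theorem mul_norm_sub_sq_le_deg_mul_energy (hG : IsWeightedGraph p) (f : V → ℂ) (a b : V) :
    p a b * ‖f b - f a‖ ^ 2 ≤ deg p a * energy p f a := by
  rw [deg_mul_energy hG]
  exact single_le_sum (f := fun y => p a y * ‖f y - f a‖ ^ 2)
    (fun y _ => mul_nonneg (hG.nonneg a y) (sq_nonneg _)) (mem_univ b)

theorem sum_deg_mul_normSq_pos {f : V → ℂ} (hG : IsWeightedGraph p) (hf0 : f ≠ 0) :
    0 < ∑ x, deg p x * ‖f x‖ ^ 2 := by
  obtain ⟨z, hz⟩ := Function.ne_iff.mp hf0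
  exact sum_pos' (fun x _ => mul_nonneg (hG.deg_pos x).le (sq_nonneg _))
    ⟨z, mem_univ z, mul_pos (hG.deg_pos z) (pow_pos (norm_pos_iff.2 hz) 2)⟩

theorem lapR_nonpos_of_forall_le (hG : IsWeightedGraph p) {g : V → ℝ} {x₀ : V}
    (hmax : ∀ y, g y ≤ g x₀) : lapR p g x₀ ≤ 0 :=
  mul_nonpos_of_nonneg_of_nonpos (inv_nonneg.2 (hG.deg_pos x₀).le) <|
    sum_nonpos fun y _ => mul_nonpos_of_nonneg_of_nonpos (hG.nonneg x₀ y) (sub_nonpos.2 (hmax y))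

end Laplacian

section CurvatureOperators

variable [Fintype V] (p : V → V → ℝ)

theorem gamma_self (f : V → ℂ) (x : V) :
    gamma p f f x = ((energy p f x / 2 : ℝ) : ℂ) := by
  have hsum : (∑ y, (p x y : ℂ) * (f y * conj (f y) - f x * conj (f x)))
      - f x * conj (∑ y, (p x y : ℂ) * (f y - f x))
      - (∑ y, (p x y : ℂ) * (f y - f x)) * conj (f x)
      = ∑ y, (p x y : ℂ) * (‖f y - f x‖ : ℂ) ^ 2 := by
    simp only [map_sum, map_mul, map_sub, Complex.conj_ofReal, mul_sum, sum_mul,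
      ← sum_sub_distrib, ← Complex.mul_conj']
    exact sum_congr rfl fun y _ => by ring
  unfold gamma lap energy
  push_cast
  rw [map_mul, ← Complex.ofReal_inv, Complex.conj_ofReal, Complex.ofReal_inv]
  linear_combination (1 / 2 : ℂ) * (deg p x : ℂ)⁻¹ * hsum

theorem gamma_ofReal_mul_left (r : ℝ) (f g : V → ℂ) (x : V) :
    gamma p (fun v => (r : ℂ) * f v) g x = r * gamma p f g x := by
  unfold gamma
  simp only [mul_assoc, lap_const_mul]
  ring

theorem gamma_ofReal_mul_right (r : ℝ) (f g : V → ℂ) (x : V) :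
    gamma p f (fun v => (r : ℂ) * g v) x = r * gamma p f g x := by
  unfold gamma
  simp only [map_mul, Complex.conj_ofReal, mul_left_comm (f _) (r : ℂ), lap_const_mul]
  ring

theorem lapR_normSq (f : V → ℂ) (x : V) :
    lapR p (fun v => ‖f v‖ ^ 2) x = energy p f x + 2 * (conj (f x) * lap p f x).re := by
  have hc : lap p (fun v => f v * conj (f v)) x = lapR p (fun v => ‖f v‖ ^ 2) x := by
    rw [← lap_ofReal]
    simp only [Complex.mul_conj', Complex.ofReal_pow]
  have h := congrArg Complex.re (gamma_self p f x)
  unfold gamma at h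
  rw [hc] at h
  simp only [Complex.mul_re, Complex.sub_re, Complex.ofReal_re, Complex.ofReal_im,
    Complex.conj_re, Complex.conj_im, Complex.sub_im, Complex.mul_im] at h ⊢
  norm_num at h ⊢
  linarith

end CurvatureOperators

section Eigenfunction

variable [Fintype V] {p : V → V → ℝ} {f : V → ℂ} {lam : ℝ}

theorem lap_eq_of_eigen (heig : ∀ x, -lap p f x = (lam : ℂ) * f x) :
    lap p f = fun v => ((-lam : ℝ) : ℂ) * f v :=
  funext fun v => by rw [← neg_neg (lap p f v), heig]; push_cast; ring

theorem lapR_normSq_of_eigen (heig : ∀ x, -lap p f x = (lam : ℂ) * f x) (x : V) :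
    lapR p (fun v => ‖f v‖ ^ 2) x = energy p f x - 2 * lam * ‖f x‖ ^ 2 := by
  rw [lapR_normSq, lap_eq_of_eigen heig, mul_left_comm, Complex.conj_mul',
    ← Complex.ofReal_pow, ← Complex.ofReal_mul, Complex.ofReal_re]
  ring

theorem gamma2_self_re_of_eigen (heig : ∀ x, -lap p f x = (lam : ℂ) * f x) (x : V) :
    (gamma2 p f f x).re = lapR p (energy p f) x / 4 + lam * energy p f x / 2 := by
  have hgamma : gamma p f f = fun v => ((1 / 2 * energy p f v : ℝ) : ℂ) :=
    funext fun v => by rw [gamma_self]; ring_nf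
  unfold gamma2
  rw [lap_eq_of_eigen heig, gamma_ofReal_mul_right, gamma_ofReal_mul_left, hgamma, lap_ofReal,
    lapR_const_mul]
  simp only [Complex.mul_re, Complex.sub_re, Complex.ofReal_re, Complex.ofReal_im]
  norm_num
  ring

theorem le_lapR_energy_of_satCD (heig : ∀ x, -lap p f x = (lam : ℂ) * f x) {n κ : ℝ}
    (hcd : SatCD p n κ f) (x : V) :
    4 * lam ^ 2 / n * ‖f x‖ ^ 2 + 2 * κ * energy p f x
      ≤ lapR p (energy p f) x + 2 * lam * energy p f x := by
  have h := hcd x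
  rw [gamma_self, Complex.ofReal_re, gamma2_self_re_of_eigen heig,
    ← neg_neg (lap p f x), heig, norm_neg, norm_mul, Complex.norm_real, Real.norm_eq_abs,
    mul_pow, sq_abs] at h
  have hdiv : 4 * lam ^ 2 / n * ‖f x‖ ^ 2 = 4 * (1 / n * (lam ^ 2 * ‖f x‖ ^ 2)) := by ring
  linarith

variable (hG : IsWeightedGraph p) (heig : ∀ x, -lap p f x = (lam : ℂ) * f x)
include hG heig

theorem sum_deg_mul_energy_of_eigen :
    ∑ x, deg p x * energy p f x = 2 * lam * ∑ x, deg p x * ‖f x‖ ^ 2 := by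
  have h := sum_deg_mul_lapR hG (fun v => ‖f v‖ ^ 2)
  simp only [lapR_normSq_of_eigen heig, mul_sub, sum_sub_distrib] at h
  rw [mul_sum, ← sub_eq_zero, ← h]
  exact congrArg₂ _ rfl (sum_congr rfl fun x _ => by ring)

theorem sum_deg_mul_eq_zero_of_eigen (hlam : lam ≠ 0) :
    ∑ x, (deg p x : ℂ) * f x = 0 := by
  have h := sum_deg_mul_lap hG f
  simp only [lap_eq_of_eigen heig, mul_left_comm _ ((-lam : ℝ) : ℂ), ← mul_sum] at h
  exact (mul_eq_zero.1 h).resolve_left (by exact_mod_cast neg_ne_zero.2 hlam)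

end Eigenfunction

section CurvatureDimension

variable [Fintype V] {p : V → V → ℝ} {f : V → ℂ} {lam n κ : ℝ}
  (hG : IsWeightedGraph p) (heig : ∀ x, -lap p f x = (lam : ℂ) * f x)
  (hlam : 0 < lam) (hf0 : f ≠ 0) (hcd : SatCD p n κ f)
include hG heig hlam hf0 hcd

theorem kappa_le_of_satCD : κ ≤ lam * (1 - 1 / n) := by
  have hS := sum_deg_mul_normSq_pos hG hf0
  have h := sum_le_sum fun x (_ : x ∈ univ) =>
    mul_le_mul_of_nonneg_left (le_lapR_energy_of_satCD heig hcd x) (hG.deg_pos x).le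
  simp only [mul_add, sum_add_distrib, sum_deg_mul_lapR hG, mul_left_comm (deg p _),
    ← mul_sum, sum_deg_mul_energy_of_eigen hG heig] at h
  have key : (4 * lam * ∑ x, deg p x * ‖f x‖ ^ 2) * (κ - lam * (1 - 1 / n)) ≤ 0 := by
    linear_combination h
  exact sub_nonpos.1 (nonpos_of_mul_nonpos_right key (by positivity))

theorem energy_le_of_satCD (hn : 0 < n) {M : ℝ} (hM : ∀ y, ‖f y‖ ≤ M) (x : V) :
    energy p f x ≤ 2 * (4 * lam - 2 * κ - lam / n) * M ^ 2 := by
  have hκ := kappa_le_of_satCD hG heig hlam hf0 hcd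
  have hlamn : 0 < lam / n := div_pos hlam hn
  set g : V → ℝ := fun v => energy p f v + (4 * lam - 2 * κ) * ‖f v‖ ^ 2
  obtain ⟨z, -⟩ := Function.ne_iff.mp hf0
  have : Nonempty V := ⟨z⟩
  obtain ⟨x₀, hx₀⟩ := Finite.exists_max g
  have hlap := lapR_nonpos_of_forall_le hG hx₀
  rw [lapR_add_const_mul, lapR_normSq_of_eigen heig] at hlap
  have hcd₀ := le_lapR_energy_of_satCD heig hcd x₀
  have hE₀ : lam * energy p f x₀ ≤ lam * ((4 * lam - 2 * κ - 2 * (lam / n)) * ‖f x₀‖ ^ 2) := by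
    have e : 4 * lam ^ 2 / n = 4 * lam * (lam / n) := by ring
    rw [e] at hcd₀
    linarith
  have hM₀ : ‖f x₀‖ ^ 2 ≤ M ^ 2 := pow_le_pow_left₀ (norm_nonneg _) (hM x₀) 2
  have hcoef : 0 ≤ 8 * lam - 4 * κ - 2 * (lam / n) := by
    rw [mul_sub, mul_one, ← div_eq_mul_one_div] at hκ
    linarith
  calc energy p f x ≤ g x := le_add_of_nonneg_right (mul_nonneg (by linarith) (sq_nonneg _))
    _ ≤ g x₀ := hx₀ x
    _ ≤ (8 * lam - 4 * κ - 2 * (lam / n)) * ‖f x₀‖ ^ 2 := by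
      have := le_of_mul_le_mul_left hE₀ hlam
      simp only [g]
      linarith
    _ ≤ (8 * lam - 4 * κ - 2 * (lam / n)) * M ^ 2 := mul_le_mul_of_nonneg_left hM₀ hcoef
    _ = 2 * (4 * lam - 2 * κ - lam / n) * M ^ 2 := by ring

end CurvatureDimension

section Diameter

variable {p : V → V → ℝ}

theorem sub_le_mul_of_distLE {u : V → ℝ} {K : ℝ} (hK : 0 ≤ K)
    (hedge : ∀ a b, Adj p a b → u a - u b ≤ K) {x y : V} {m : ℕ} (hxy : distLE p x y m) :
    u x - u y ≤ m * K := by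
  obtain ⟨L, hlen, hchain, rfl⟩ := hxy
  have hpath : ∀ (L : List V) (x : V), List.IsChain (Adj p) (x :: L) →
      u x - u ((x :: L).getLast (List.cons_ne_nil x L)) ≤ L.length * K := by
    intro L
    induction L with
    | nil => simp
    | cons b L ih =>
      intro x hchain
      rw [List.isChain_cons_cons] at hchain
      rw [List.getLast_cons (List.cons_ne_nil b L), List.length_cons, Nat.cast_succ]
      linarith [hedge x b hchain.1, ih b hchain.2]
  exact (hpath L x hchain).trans (mul_le_mul_of_nonneg_right (by exact_mod_cast hlen) hK)

theorem norm_le_mul_of_sum_deg_mul_eq_zero [Fintype V] (hG : IsWeightedGraph p) {f : V → ℂ}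
    {D : ℕ} (hD : ∀ x y, distLE p x y D) {K : ℝ} (hK : 0 ≤ K)
    (hedge : ∀ a b, Adj p a b → ‖f a - f b‖ ≤ K) (hsum : ∑ x, (deg p x : ℂ) * f x = 0)
    (x : V) : ‖f x‖ ≤ D * K := by
  set u : V → ℝ := fun v => (conj (f x) * f v).re
  have hux : u x = ‖f x‖ ^ 2 := by
    simp only [u, Complex.conj_mul', ← Complex.ofReal_pow, Complex.ofReal_re]
  have hsum_u : ∑ v, deg p v * u v ≤ ∑ _v : V, 0 := by
    have h := congrArg (fun z => (conj (f x) * z).re) hsum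
    simp only [mul_sum, Complex.re_sum, mul_left_comm (conj (f x)), Complex.re_ofReal_mul,
      mul_zero, Complex.zero_re] at h
    simpa only [u, sum_const_zero] using h.le
  obtain ⟨y, -, hy⟩ := exists_le_of_sum_le ⟨x, mem_univ x⟩ hsum_u
  have huy : u y ≤ 0 := nonpos_of_mul_nonpos_right hy (hG.deg_pos y)
  have hdrop : ∀ a b, Adj p a b → u a - u b ≤ ‖f x‖ * K := fun a b hab => by
    calc u a - u b = (conj (f x) * (f a - f b)).re := by simp only [u, mul_sub, Complex.sub_re]
      _ ≤ ‖f x‖ * ‖f a - f b‖ :=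
        (Complex.re_le_norm _).trans_eq (by rw [norm_mul, Complex.norm_conj])
      _ ≤ ‖f x‖ * K := mul_le_mul_of_nonneg_left (hedge a b hab) (norm_nonneg _)
  have h := sub_le_mul_of_distLE (mul_nonneg (norm_nonneg _) hK) hdrop (hD x y)
  rw [hux] at h
  nlinarith [norm_nonneg (f x), mul_nonneg (Nat.cast_nonneg D : (0 : ℝ) ≤ D) hK]

end Diameter

theorem eigenvalue_lower_bound_general {V : Type*} [Fintype V]
    (p : V → V → ℝ) (hG : IsWeightedGraph p)
    (hsimple : Simple p) (D : ℕ) (hD : IsDiameter p D)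
    (d : ℝ) (hd : IsMaxDegree p d)
    (n κ : ℝ) (hn : 1 < n) (f : V → ℂ) (lam : ℝ) (hlam : 0 < lam)
    (hf0 : f ≠ 0) (heig : ∀ x, -lap p f x = (lam : ℂ) * f x)
    (hcd : SatCD p n κ f) :
    (1 + 4 * κ * d * (D : ℝ) ^ 2) / (d * (8 - 2 / n) * (D : ℝ) ^ 2) ≤ lam := by
  obtain ⟨z, hz⟩ := Function.ne_iff.mp hf0
  have : Nonempty V := ⟨z⟩
  have hd0 : 0 < d := (hG.deg_pos z).trans_le (hd.1 z)
  obtain ⟨x₁, hM⟩ := Finite.exists_max fun v => ‖f v‖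
  have hM0 : 0 < ‖f x₁‖ := (norm_pos_iff.2 hz).trans_le (hM z)
  set C := 2 * (4 * lam - 2 * κ - lam / n) * ‖f x₁‖ ^ 2
  have hE : ∀ x, energy p f x ≤ C :=
    energy_le_of_satCD hG heig hlam hf0 hcd (by linarith) hM
  have hedge : ∀ a b, Adj p a b → ‖f a - f b‖ ≤ √(d * C) := fun a b hab => by
    refine Real.le_sqrt_of_sq_le ?_
    calc ‖f a - f b‖ ^ 2 = p a b * ‖f b - f a‖ ^ 2 := by
          rw [(hsimple a b).resolve_left hab.ne', one_mul, norm_sub_rev]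
      _ ≤ deg p a * energy p f a := mul_norm_sub_sq_le_deg_mul_energy hG f a b
      _ ≤ d * C := mul_le_mul (hd.1 a) (hE a) (energy_nonneg hG f a) hd0.le
  have hMD : ‖f x₁‖ ≤ D * √(d * C) := norm_le_mul_of_sum_deg_mul_eq_zero hG hD.1
    (Real.sqrt_nonneg _) hedge (sum_deg_mul_eq_zero_of_eigen hG heig hlam.ne') x₁
  have hkey : 1 ≤ 2 * d * D ^ 2 * (4 * lam - 2 * κ - lam / n) := by
    have hdC : 0 ≤ d * C := mul_nonneg hd0.le ((energy_nonneg hG f z).trans (hE z))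
    have hsq := pow_le_pow_left₀ hM0.le hMD 2
    rw [mul_pow, Real.sq_sqrt hdC] at hsq
    exact le_of_mul_le_mul_right (by linarith) (pow_pos hM0 2)
  have hD0 : (D : ℝ) ^ 2 ≠ 0 := fun h => by norm_num [h] at hkey
  have hn' : 0 < 8 - 2 / n := by linarith [div_lt_self two_pos hn]
  rw [div_le_iff₀ (by positivity)]
  linear_combination hkey

/-- Theorem of Chung–Lin–Yau.  For a finite, connected,
simple graph with diameter `D` and maximum degree `d`, and a harmonic
eigenfunction `f` of `−Δ` with eigenvalue `λ > 0` satisfying `CD(n,κ)`: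
`λ ≥ (1 + 4κdD²)/(d(8 − 2/n)D²)`. -/
theorem eigenvalue_lower_bound {V : Type*} [Fintype V] [Nonempty V]
    (p : V → V → ℝ) (hG : IsWeightedGraph p) (hconn : Connected p)
    (hsimple : Simple p) (D : ℕ) (hD : IsDiameter p D)
    (d : ℝ) (hd : IsMaxDegree p d)
    (n κ : ℝ) (hn : 1 < n) (f : V → ℂ) (lam : ℝ) (hlam : 0 < lam)
    (hf0 : f ≠ 0) (heig : ∀ x, -lap p f x = (lam : ℂ) * f x)
    (hcd : SatCD p n κ f) :
    (1 + 4 * κ * d * (D : ℝ) ^ 2) / (d * (8 - 2 / n) * (D : ℝ) ^ 2) ≤ lam :=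
  eigenvalue_lower_bound_general p hG hsimple D hD d hd n κ hn f lam hlam hf0 heig hcd

end Mag
end
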